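/- Let 𝒞 be a small category. For every presheaf F : 𝒞ᵒᵖ ⥤ Type, the covariant isotropy group of F in the presheaf category 𝒞ᵒᵖ ⥤ Type, i.e. the group Aut(Under.forget F) of natural automorphisms of the projection functor from the under category F/(𝒞ᵒᵖ ⥤ Type) to 𝒞ᵒᵖ ⥤ Type, is isomorphic as a group to Aut(𝟭_𝒞), the group of natural automorphisms of the identity functor of 𝒞. -/

import Mathlib

/-!
A natural automorphism `θ` of `Under.forget F` is determined by its components at the objects
`inl : F ⟶ F ⊔ G`. There `θ` maps the summand `G` into itself: if `θ (inr x)` lay in `F`, the two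
under-maps `F ⊔ G ⟶ F ⊔ (G ⊔ G)` induced by the two inclusions of `G`, which fix `F`, would agree
on it, so by naturality the injective `θ` would identify the distinct images of `inr x`. The
restrictions to `G` form a natural automorphism of the identity of the presheaf category whose
whiskering is `θ` (compare along the under-map `F ⊔ X ⟶ X` given by the structure map and the
identity). By Yoneda, a central element of the presheaf category is determined by its components
at representables, so the center of the presheaf category is that of `C`.
-/

open CategoryTheory Limits Opposite

universe u v w

namespace CategoryTheory

namespace CatCenter

variable {C : Type*} [Category.{v} C]

@[simps]
def toPresheaf (z : CatCenter C) : CatCenter (Cᵒᵖ ⥤ Type v) where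
  app G :=
    { app c := G.map (z.app c.unop).op
      naturality c c' f := by
        dsimp
        rw [← G.map_comp, ← G.map_comp, ← f.op_unop, ← op_comp, ← op_comp, z.naturality] }
  naturality G H g := by ext c x; exact (NatTrans.naturality_apply g _ x).symm

lemma toPresheaf_app_yoneda (z : CatCenter C) (X : C) :
    (toPresheaf z).app (yoneda.obj X) = yoneda.map (z.app X) := by
  ext c f
  exact (z.naturality f).symm

noncomputable def ofPresheaf (ζ : CatCenter (Cᵒᵖ ⥤ Type v)) : CatCenter C where
  app X := yoneda.preimage (ζ.app (yoneda.obj X))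
  naturality X Y f := yoneda.map_injective (by simpa using ζ.naturality (yoneda.map f))

@[simp]
lemma yoneda_map_ofPresheaf_app (ζ : CatCenter (Cᵒᵖ ⥤ Type v)) (X : C) :
    yoneda.map ((ofPresheaf ζ).app X) = ζ.app (yoneda.obj X) :=
  yoneda.map_preimage _

lemma toPresheaf_ofPresheaf (ζ : CatCenter (Cᵒᵖ ⥤ Type v)) : toPresheaf (ofPresheaf ζ) = ζ := by
  ext1 G
  refine hom_ext_yoneda fun X p => ?_
  rw [naturality, naturality, toPresheaf_app_yoneda, yoneda_map_ofPresheaf_app]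

lemma ofPresheaf_toPresheaf (z : CatCenter C) : ofPresheaf (toPresheaf z) = z := by
  ext X
  exact yoneda.map_injective (by rw [yoneda_map_ofPresheaf_app, toPresheaf_app_yoneda])

noncomputable def presheafMulEquiv : CatCenter C ≃* CatCenter (Cᵒᵖ ⥤ Type v) where
  toFun := toPresheaf
  invFun := ofPresheaf
  left_inv := ofPresheaf_toPresheaf
  right_inv := toPresheaf_ofPresheaf
  map_mul' z z' := by
    ext G : 1
    rw [mul_app']
    ext c x
    simp only [toPresheaf_app_app, mul_app]
    simp

end CatCenter

def Functor.autIdWhiskerLeft {A D : Type*} [Category A] [Category D] (P : A ⥤ D) :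
    Aut (𝟭 D) →* Aut P :=
  ((whiskeringLeft A D D).obj P).mapAut (𝟭 D)

namespace Under

variable {J : Type*} [Category J] {F : J ⥤ Type w}

lemma forget_naturality_apply (θ : Under.forget F ⟶ Under.forget F) {X Y : Under F} (f : X ⟶ Y)
    (j : J) (x : X.right.obj j) :
    (θ.app Y).app j (f.right.app j x) = f.right.app j ((θ.app X).app j x) :=
  types_congr_hom (NatTrans.congr_app (θ.naturality f) j) x

lemma forget_iso_app_injective (θ : Under.forget F ≅ Under.forget F) (X : Under F) (j : J) :
    Function.Injective ((θ.hom.app X).app j) :=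
  ((θ.app X).app j).toEquiv.injective

variable (F) in
abbrev coprodInl (G : J ⥤ Type w) : Under F := Under.mk (FunctorToTypes.coprod.inl (G := G))

variable (F) in
def coprodInlMap {G H : J ⥤ Type w} (g : G ⟶ H) : coprodInl F G ⟶ coprodInl F H :=
  Under.homMk <|
    FunctorToTypes.coprod.desc FunctorToTypes.coprod.inl (g ≫ FunctorToTypes.coprod.inr)

lemma exists_app_coprodInl_inr (θ : Under.forget F ≅ Under.forget F) (G : J ⥤ Type w) (j : J)
    (x : G.obj j) :
    ∃ y, (θ.hom.app (coprodInl F G)).app j (.inr x) = .inr y := by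
  rcases h : (θ.hom.app (coprodInl F G)).app j (.inr x) with z | y
  · exfalso
    have h₁ := forget_naturality_apply θ.hom
      (coprodInlMap F (FunctorToTypes.coprod.inl (G := G))) j (.inr x)
    have h₂ := forget_naturality_apply θ.hom
      (coprodInlMap F (FunctorToTypes.coprod.inr (F := G))) j (.inr x)
    rw [h] at h₁ h₂
    cases forget_iso_app_injective θ _ j (h₁.trans h₂.symm)
  · exact ⟨y, rfl⟩

noncomputable def isotropyComponent (θ : Under.forget F ≅ Under.forget F) (G : J ⥤ Type w) :
    G ⟶ G where
  app j := ↾fun x => (exists_app_coprodInl_inr θ G j x).choose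
  naturality j j' f := by
    ext x
    apply Sum.inr_injective (α := F.obj j')
    have h := NatTrans.naturality_apply (F := FunctorToTypes.coprod F G)
      (θ.hom.app (coprodInl F G)) f (Sum.inr x : F.obj j ⊕ G.obj j)
    exact ((exists_app_coprodInl_inr θ G j' (G.map f x)).choose_spec.symm.trans h).trans
      (congrArg ((FunctorToTypes.coprod F G).map f) (exists_app_coprodInl_inr θ G j x).choose_spec)

lemma inr_isotropyComponent_app (θ : Under.forget F ≅ Under.forget F) (G : J ⥤ Type w) (j : J)
    (x : G.obj j) :
    Sum.inr ((isotropyComponent θ G).app j x) = (θ.hom.app (coprodInl F G)).app j (.inr x) :=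
  (exists_app_coprodInl_inr θ G j x).choose_spec.symm

lemma isotropyComponent_naturality (θ : Under.forget F ≅ Under.forget F) {G H : J ⥤ Type w}
    (g : G ⟶ H) : g ≫ isotropyComponent θ H = isotropyComponent θ G ≫ g := by
  ext j x
  apply Sum.inr_injective (α := F.obj j)
  have h := forget_naturality_apply θ.hom (coprodInlMap F g) j (.inr x)
  rw [← inr_isotropyComponent_app] at h
  exact (inr_isotropyComponent_app θ H j (g.app j x)).trans h

lemma hom_app_eq_isotropyComponent (θ : Under.forget F ≅ Under.forget F) (X : Under F) :
    θ.hom.app X = isotropyComponent θ X.right := by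
  ext j x
  let m : coprodInl F X.right ⟶ X := Under.homMk (FunctorToTypes.coprod.desc X.hom (𝟙 X.right))
  exact (forget_naturality_apply θ.hom m j (.inr x)).trans
    (congrArg (m.right.app j) (inr_isotropyComponent_app θ X.right j x).symm)

variable (F) in
noncomputable def isotropyToCatCenter : Aut (Under.forget F) →* CatCenter (J ⥤ Type w) where
  toFun θ := { app := isotropyComponent θ, naturality _ _ := isotropyComponent_naturality θ }
  map_one' := by
    ext G j x
    exact Sum.inr_injective (inr_isotropyComponent_app (Iso.refl _) G j x)
  map_mul' θ θ' := by
    ext G j x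
    apply Sum.inr_injective (α := F.obj j)
    exact (inr_isotropyComponent_app _ G j x).trans <|
      (congrArg ((θ.hom.app (coprodInl F G)).app j) (inr_isotropyComponent_app θ' G j x).symm).trans
        (inr_isotropyComponent_app θ G j _).symm

lemma isotropyToCatCenter_autIdWhiskerLeft (w : Aut (𝟭 (J ⥤ Type w))) :
    isotropyToCatCenter F ((Under.forget F).autIdWhiskerLeft w) = w.hom := by
  ext G j x
  have h := NatTrans.congr_app (w.hom.naturality (FunctorToTypes.coprod.inr (F := F) (G := G))) j
  exact Sum.inr_injective ((inr_isotropyComponent_app _ G j x).trans (types_congr_hom h x))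

variable (F) in
noncomputable def isotropyMulEquivAutId : Aut (Under.forget F) ≃* Aut (𝟭 (J ⥤ Type w)) :=
  MulEquiv.symm
    { toFun := (Under.forget F).autIdWhiskerLeft
      invFun θ := Aut.unitsEndEquivAut _ ((isotropyToCatCenter F).toHomUnits θ)
      left_inv w := Iso.ext (isotropyToCatCenter_autIdWhiskerLeft w)
      right_inv θ :=
        Iso.ext (NatTrans.ext (funext fun X => (hom_app_eq_isotropyComponent θ X).symm))
      map_mul' := map_mul _ }

end Under

end CategoryTheory

/-- For a small category `C` and any presheaf `F : Cᵒᵖ ⥤ Type`, the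
covariant isotropy group of `F` in the presheaf category, i.e. the group of natural
automorphisms of the projection functor `F/(Cᵒᵖ ⥤ Type) ⥤ (Cᵒᵖ ⥤ Type)`, is
isomorphic to `Aut (𝟭 C)`. -/
theorem isotropy_of_presheaf_iso_aut_id {C : Type u} [SmallCategory C]
    (F : Cᵒᵖ ⥤ Type u) :
    Nonempty (Aut (Under.forget F) ≃* Aut (𝟭 C)) := by
  have center : Aut (𝟭 C) ≃* Aut (𝟭 (Cᵒᵖ ⥤ Type u)) :=
    (Aut.unitsEndEquivAut _).symm.trans
      ((Units.mapEquiv CatCenter.presheafMulEquiv).trans (Aut.unitsEndEquivAut _))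
  exact ⟨(Under.isotropyMulEquivAutId F).trans center.symm⟩
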